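/- arXiv:1205.0241 — 10 statements merged into one kernel-verified Lean document; each statement's English description precedes it below -/
import Mathlib

section
/- Let S be a countable type with measurable singletons and T a measurable space. Let M : Ω → S be a random variable and, for every m ∈ S, let Y_m : Ω → T be a random variable. If for every m ∈ S the variables Y_m and M are independent, then for every measurable set B ⊆ T one has P({ω : Y_{M(ω)}(ω) ∈ B}) = Σ_{m ∈ S} P(Y_m ∈ B) · P(M = m). -/
open MeasureTheory ProbabilityTheory

/-- Factorization `p(Y(M)) = Σ_m p(Y_m ∈ B) · p(M = m)` under the cross-world
independence assumption `Y_m ⟂ M` for every `m`. -/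
theorem nested_potential_outcome_factorization
    {Ω : Type*} [MeasurableSpace Ω] (P : Measure Ω) [IsProbabilityMeasure P]
    {S : Type*} [Countable S] [MeasurableSpace S] [MeasurableSingletonClass S]
    {T : Type*} [MeasurableSpace T]
    (M : Ω → S) (hM : Measurable M)
    (Y : S → Ω → T) (hY : ∀ m, Measurable (Y m))
    (hindep : ∀ m, IndepFun (Y m) M P)
    (B : Set T) (hB : MeasurableSet B) :
    P {ω | Y (M ω) ω ∈ B} = ∑' m : S, P {ω | Y m ω ∈ B} * P {ω | M ω = m} := by
  have hset : {ω | Y (M ω) ω ∈ B} = ⋃ m : S, ({ω | Y m ω ∈ B} ∩ {ω | M ω = m}) := by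
    ext ω
    simp only [Set.mem_setOf_eq, Set.mem_iUnion, Set.mem_inter_iff]
    constructor
    · intro h; exact ⟨M ω, h, rfl⟩
    · rintro ⟨m, h, rfl⟩; exact h
  have hmeasY : ∀ m : S, MeasurableSet {ω | Y m ω ∈ B} := fun m => (hY m) hB
  have hmeasM : ∀ m : S, MeasurableSet {ω | M ω = m} := fun m =>
    hM (measurableSet_singleton m)
  have hdisj : Pairwise (Function.onFun Disjoint
      fun m : S => ({ω | Y m ω ∈ B} ∩ {ω | M ω = m})) := by
    intro m n hmn
    refine Set.disjoint_left.2 ?_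
    rintro ω ⟨_, h1⟩ ⟨_, h2⟩
    exact hmn (h1.symm.trans h2)
  rw [hset, measure_iUnion hdisj (fun m => (hmeasY m).inter (hmeasM m))]
  refine tsum_congr fun m => ?_
  exact (hindep m).measure_inter_preimage_eq_mul _ _ hB (measurableSet_singleton m)
end

section
/- Let S be a finite type, M : Ω → S a random variable, and for every m ∈ S let Y_m : Ω → ℝ be an integrable random variable such that Y_m and M are independent. If the composed variable ω ↦ Y_{M(ω)}(ω) is integrable, then E[ω ↦ Y_{M(ω)}(ω)] = Σ_{m ∈ S} E[Y_m] · P(M = m). -/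
/-!
On the fibre `{M = m}` the variable `Y(M)` coincides with `Y m`, so `E[Y(M)]` splits as the sum
over `m` of the integrals of `Y m` over `{M = m}`; as `Y m` is independent of `M`, each of these
is `E[Y m] · P(M = m)`.
-/

open MeasureTheory ProbabilityTheory

section

variable {Ω : Type*} {mΩ : MeasurableSpace Ω} {P : Measure Ω}

lemma ProbabilityTheory.IndepFun.setIntegral_preimage_eq_mul {β : Type*} [MeasurableSpace β]
    {X : Ω → ℝ} {Z : Ω → β} (hXZ : IndepFun X Z P) (hX : AEMeasurable X P) (hZ : Measurable Z)
    {s : Set β} (hs : MeasurableSet s) :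
    ∫ ω in Z ⁻¹' s, X ω ∂P = P.real (Z ⁻¹' s) * ∫ ω, X ω ∂P :=
  Indep.setIntegral_eq_mul (f := id) hZ.comap_le hXZ.symm hX ⟨s, hs, rfl⟩ aestronglyMeasurable_id

lemma MeasureTheory.integral_comp_eq_sum_setIntegral_preimage_singleton {S E : Type*} [Fintype S]
    [MeasurableSpace S] [MeasurableSingletonClass S] [NormedAddCommGroup E] [NormedSpace ℝ E]
    {M : Ω → S} (hM : Measurable M) {Y : S → Ω → E} (hY : ∀ m, Integrable (Y m) P) :
    ∫ ω, Y (M ω) ω ∂P = ∑ m, ∫ ω in M ⁻¹' {m}, Y m ω ∂P := by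
  have hfiber : ∀ m, MeasurableSet (M ⁻¹' {m}) := fun m => hM (measurableSet_singleton m)
  have hsum : (fun ω => Y (M ω) ω) = fun ω => ∑ m, (M ⁻¹' {m}).indicator (Y m) ω := by
    funext ω
    rw [Finset.sum_eq_single_of_mem (M ω) (Finset.mem_univ _) fun m _ hm => ?_]
    · simp
    · exact Set.indicator_of_notMem (s := M ⁻¹' {m}) (Ne.symm hm) (Y m)
  rw [hsum, integral_finsetSum _ fun m _ => (hY m).indicator (hfiber m)]
  simp_rw [integral_indicator (hfiber _)]

end

theorem nested_potential_outcome_expectation_general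
    {Ω : Type*} [MeasurableSpace Ω] (P : Measure Ω)
    {S : Type*} [Fintype S] [MeasurableSpace S] [MeasurableSingletonClass S]
    (M : Ω → S) (hM : Measurable M)
    (Y : S → Ω → ℝ)
    (hYint : ∀ m, Integrable (Y m) P)
    (hindep : ∀ m, IndepFun (Y m) M P) :
    ∫ ω, Y (M ω) ω ∂P = ∑ m : S, (∫ ω, Y m ω ∂P) * (P {ω | M ω = m}).toReal := by
  rw [integral_comp_eq_sum_setIntegral_preimage_singleton hM hYint]
  refine Finset.sum_congr rfl fun m _ => ?_
  rw [(hindep m).setIntegral_preimage_eq_mul (hYint m).aemeasurable hM (measurableSet_singleton m),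
    mul_comm, measureReal_def]
  rfl

/-- Expectation form of the factorization: `E[Y(M)] = Σ_m E[Y_m] · P(M = m)`
under the cross-world independence assumption `Y_m ⟂ M` for every `m`. -/
theorem nested_potential_outcome_expectation
    {Ω : Type*} [MeasurableSpace Ω] (P : Measure Ω) [IsProbabilityMeasure P]
    {S : Type*} [Fintype S] [MeasurableSpace S] [MeasurableSingletonClass S]
    (M : Ω → S) (hM : Measurable M)
    (Y : S → Ω → ℝ) (hYmeas : ∀ m, Measurable (Y m))
    (hYint : ∀ m, Integrable (Y m) P)
    (hindep : ∀ m, IndepFun (Y m) M P)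
    (hint : Integrable (fun ω => Y (M ω) ω) P) :
    ∫ ω, Y (M ω) ω ∂P = ∑ m : S, (∫ ω, Y m ω ∂P) * (P {ω | M ω = m}).toReal :=
  nested_potential_outcome_expectation_general P M hM Y hYint hindep
end

section
/- Let S be a countable type with measurable singletons and T a measurable space. Let A : Ω → S be a random variable, let (Y_a)_{a ∈ S} be a family of random variables Y_a : Ω → T (potential outcomes), and let Y : Ω → T satisfy consistency: Y(ω) = Y_{A(ω)}(ω) for all ω. Fix a ∈ S with P(A = a) > 0 and assume the ignorability condition that Y_a and A are independent. Then for every measurable set B ⊆ T, P(Y_a ∈ B) = P(Y ∈ B | A = a). -/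
open MeasureTheory ProbabilityTheory

/-- Under ignorability `Y_a ⟂ A` and consistency, the interventional distribution
equals the observational conditional distribution: `P(Y_a ∈ B) = P(Y ∈ B | A = a)`. -/
theorem ignorability_interventional_eq_conditional
    {Ω : Type*} [MeasurableSpace Ω] (P : Measure Ω) [IsProbabilityMeasure P]
    {S : Type*} [Countable S] [MeasurableSpace S] [MeasurableSingletonClass S]
    {T : Type*} [MeasurableSpace T]
    (A : Ω → S) (hA : Measurable A)
    (Ypo : S → Ω → T) (hYpo : ∀ a, Measurable (Ypo a))
    (Y : Ω → T) (hcons : ∀ ω, Y ω = Ypo (A ω) ω)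
    (a : S) (ha : 0 < P {ω | A ω = a})
    (hindep : IndepFun (Ypo a) A P)
    (B : Set T) (hB : MeasurableSet B) :
    P {ω | Ypo a ω ∈ B} = P[|{ω | A ω = a}] {ω | Y ω ∈ B} := by
  have hEset : {ω | A ω = a} = A ⁻¹' {a} := rfl
  have hEmeas : MeasurableSet {ω | A ω = a} := hA (measurableSet_singleton a)
  rw [cond_apply hEmeas]
  have hsets : {ω | A ω = a} ∩ {ω | Y ω ∈ B} = Ypo a ⁻¹' B ∩ A ⁻¹' {a} := by
    ext ω
    simp only [Set.mem_inter_iff, Set.mem_setOf_eq, Set.mem_preimage, Set.mem_singleton_iff,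
      hcons ω]
    constructor
    · rintro ⟨h1, h2⟩; exact ⟨h1 ▸ h2, h1⟩
    · rintro ⟨h1, h2⟩; exact ⟨h2, h2 ▸ h1⟩
  rw [hsets, hindep.measure_inter_preimage_eq_mul B {a} hB (measurableSet_singleton a)]
  rw [← hEset, mul_comm (P {ω | A ω = a})⁻¹, mul_assoc,
    ENNReal.mul_inv_cancel ha.ne' (measure_ne_top P _), mul_one]
  rfl
end

section
/- Let S and U be countable types with measurable singletons and T a measurable space. Let A : Ω → S and C : Ω → U be random variables, let (Y_a)_{a ∈ S} be a family of random variables Y_a : Ω → T (potential outcomes), and let Y : Ω → T satisfy consistency: Y(ω) = Y_{A(ω)}(ω) for all ω. Fix a ∈ S. Assume conditional ignorability: for every measurable B ⊆ T, every a' ∈ S and every c ∈ U, P(Y_a ∈ B, A = a', C = c) · P(C = c) = P(Y_a ∈ B, C = c) · P(A = a', C = c). Assume positivity: P(A = a, C = c) > 0 for every c with P(C = c) > 0. Then for every measurable set B ⊆ T, P(Y_a ∈ B) = Σ_{c : P(C = c) > 0} P(Y ∈ B | A = a, C = c) · P(C = c). -/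
/-!
Split `P (Y_a ∈ B)` along the fibres of `C`; null fibres contribute nothing. On the event
`{A = a}` consistency lets `Y` be replaced by `Y_a`, and conditional ignorability turns
`P (Y_a ∈ B | A = a, C = c) · P (C = c)` back into `P (Y_a ∈ B, C = c)`.
-/

open MeasureTheory ProbabilityTheory

namespace ProbabilityTheory

variable {Ω U : Type*} [MeasurableSpace Ω]

theorem measure_eq_tsum_inter_fiber [Countable U] [MeasurableSpace U]
    [MeasurableSingletonClass U] {C : Ω → U} (hC : Measurable C) (μ : Measure Ω) (E : Set Ω) :
    μ E = ∑' c, μ (E ∩ C ⁻¹' {c}) := by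
  have hcover : ⋃ c, C ⁻¹' {c} = Set.univ := Set.iUnion_eq_univ_iff.2 fun ω ↦ ⟨C ω, rfl⟩
  rw [← Measure.restrict_apply_univ, ← hcover,
    measure_iUnion (pairwise_disjoint_fiber C) fun c ↦ hC (measurableSet_singleton c)]
  simp_rw [Measure.restrict_apply (hC (measurableSet_singleton _)), Set.inter_comm]

theorem measure_eq_tsum_inter_fiber_of_pos [Countable U] [MeasurableSpace U]
    [MeasurableSingletonClass U] {C : Ω → U} (hC : Measurable C) (μ : Measure Ω) (E : Set Ω) :
    μ E = ∑' c : {c : U // 0 < μ (C ⁻¹' {c})}, μ (E ∩ C ⁻¹' {(c : U)}) := by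
  have hsupp : Function.support (fun c ↦ μ (E ∩ C ⁻¹' {c})) ⊆ {c | 0 < μ (C ⁻¹' {c})} :=
    fun c hc ↦ pos_iff_ne_zero.2 fun h0 ↦ hc (measure_inter_null_of_null_right E h0)
  exact (measure_eq_tsum_inter_fiber hC μ E).trans (tsum_subtype_eq_of_support_subset hsupp).symm

theorem cond_inter_mul_eq_of_condIndep {μ : Measure Ω} [IsFiniteMeasure μ] {E F G : Set Ω}
    (hFG : MeasurableSet (F ∩ G)) (hFG₀ : μ (F ∩ G) ≠ 0)
    (hind : μ (E ∩ (F ∩ G)) * μ G = μ (E ∩ G) * μ (F ∩ G)) :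
    μ[E | F ∩ G] * μ G = μ (E ∩ G) := by
  refine (ENNReal.mul_left_inj hFG₀ (measure_ne_top μ _)).1 ?_
  rw [mul_right_comm, cond_mul_eq_inter hFG, Set.inter_comm, hind]

end ProbabilityTheory

theorem backdoor_adjustment_formula_general
    {Ω : Type*} [MeasurableSpace Ω] (P : Measure Ω) [IsProbabilityMeasure P]
    {S : Type*} [MeasurableSpace S] [MeasurableSingletonClass S]
    {U : Type*} [Countable U] [MeasurableSpace U] [MeasurableSingletonClass U]
    {T : Type*} [MeasurableSpace T]
    (A : Ω → S) (hA : Measurable A)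
    (C : Ω → U) (hC : Measurable C)
    (Ypo : S → Ω → T)
    (Y : Ω → T) (hcons : ∀ ω, Y ω = Ypo (A ω) ω)
    (a : S)
    (hcondIgn : ∀ (B : Set T), MeasurableSet B → ∀ (a' : S) (c : U),
      P {ω | Ypo a ω ∈ B ∧ A ω = a' ∧ C ω = c} * P {ω | C ω = c}
        = P {ω | Ypo a ω ∈ B ∧ C ω = c} * P {ω | A ω = a' ∧ C ω = c})
    (hpos : ∀ c : U, 0 < P {ω | C ω = c} → 0 < P {ω | A ω = a ∧ C ω = c}) :
    ∀ (B : Set T), MeasurableSet B →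
      P {ω | Ypo a ω ∈ B}
        = ∑' c : {c : U // 0 < P {ω | C ω = c}},
            P[|{ω | A ω = a ∧ C ω = (c : U)}] {ω | Y ω ∈ B} * P {ω | C ω = (c : U)} := by
  intro B hB
  refine (measure_eq_tsum_inter_fiber_of_pos hC P _).trans (tsum_congr fun ⟨c, hc⟩ ↦ ?_)
  have hAC : MeasurableSet {ω | A ω = a ∧ C ω = c} :=
    (hA (measurableSet_singleton a)).inter (hC (measurableSet_singleton c))
  have hconsistent : {ω | A ω = a ∧ C ω = c} ∩ {ω | Y ω ∈ B}
      = {ω | A ω = a ∧ C ω = c} ∩ {ω | Ypo a ω ∈ B} :=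
    Set.ext fun ω ↦ and_congr_right fun h ↦ show Y ω ∈ B ↔ Ypo a ω ∈ B by rw [hcons, h.1]
  rw [← cond_inter_self hAC, hconsistent, cond_inter_self hAC]
  exact (cond_inter_mul_eq_of_condIndep hAC (hpos c hc).ne' (hcondIgn B hB a c)).symm

/-- The back-door (adjustment) formula: under conditional ignorability of `Y_a` and `A`
given `C`, consistency, and positivity, `P(Y_a ∈ B) = Σ_c P(Y ∈ B | A = a, C = c)·P(C = c)`. -/
theorem backdoor_adjustment_formula
    {Ω : Type*} [MeasurableSpace Ω] (P : Measure Ω) [IsProbabilityMeasure P]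
    {S : Type*} [Countable S] [MeasurableSpace S] [MeasurableSingletonClass S]
    {U : Type*} [Countable U] [MeasurableSpace U] [MeasurableSingletonClass U]
    {T : Type*} [MeasurableSpace T]
    (A : Ω → S) (hA : Measurable A)
    (C : Ω → U) (hC : Measurable C)
    (Ypo : S → Ω → T) (hYpo : ∀ a, Measurable (Ypo a))
    (Y : Ω → T) (hcons : ∀ ω, Y ω = Ypo (A ω) ω)
    (a : S)
    (hcondIgn : ∀ (B : Set T), MeasurableSet B → ∀ (a' : S) (c : U),
      P {ω | Ypo a ω ∈ B ∧ A ω = a' ∧ C ω = c} * P {ω | C ω = c}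
        = P {ω | Ypo a ω ∈ B ∧ C ω = c} * P {ω | A ω = a' ∧ C ω = c})
    (hpos : ∀ c : U, 0 < P {ω | C ω = c} → 0 < P {ω | A ω = a ∧ C ω = c}) :
    ∀ (B : Set T), MeasurableSet B →
      P {ω | Ypo a ω ∈ B}
        = ∑' c : {c : U // 0 < P {ω | C ω = c}},
            P[|{ω | A ω = a ∧ C ω = (c : U)}] {ω | Y ω ∈ B} * P {ω | C ω = (c : U)} :=
  backdoor_adjustment_formula_general P A hA C hC Ypo Y hcons a hcondIgn hpos
end

section
/- Let A, ε_y, ε_m : Ω → ℝ be square-integrable random variables with E[ε_y] = 0, E[ε_m] = 0, Cov(A, ε_y) = 0, Cov(A, ε_m) = 0, and Var(A) > 0. Let α0, α1, α2, β0, β1 ∈ ℝ and define M = β0 + β1·A + ε_m and Y = α0 + α1·A + α2·M + ε_y. Then the simple-regression slope of Y on A satisfies Cov(A, Y) / Var(A) = α1 + α2·β1; equivalently, the difference-method quantity Cov(A, Y)/Var(A) − α1 equals the product-method quantity α2·β1. -/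
/-!
Substituting `M` into `Y` writes `Y = c + (α1 + α2 β1) A + (α2 εm + εy)` with a noise term
uncorrelated with `A`. Covariance with `A` ignores constants and is bilinear, so
`Cov(A, Y) = (α1 + α2 β1) Var(A)`.
-/

open MeasureTheory ProbabilityTheory

/-- Covariance of two real random variables. -/
noncomputable def cov {Ω : Type*} [MeasurableSpace Ω] (P : Measure Ω) (X Y : Ω → ℝ) : ℝ :=
  ∫ ω, (X ω - ∫ x, X x ∂P) * (Y ω - ∫ x, Y x ∂P) ∂P

lemma cov_eq_covariance {Ω : Type*} [MeasurableSpace Ω] (P : Measure Ω) (X Y : Ω → ℝ) :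
    cov P X Y = cov[X, Y; P] :=
  rfl

namespace ProbabilityTheory

variable {Ω : Type*} {mΩ : MeasurableSpace Ω} {μ : Measure Ω} [IsProbabilityMeasure μ]
  {X U : Ω → ℝ}

lemma covariance_affine_add_right (hX : MemLp X 2 μ) (hU : MemLp U 2 μ) (a b : ℝ) :
    cov[X, fun ω ↦ a + b * X ω + U ω; μ] = b * Var[X; μ] + cov[X, U; μ] := by
  have hbX : MemLp (fun ω ↦ b * X ω) 2 μ := hX.const_mul b
  calc cov[X, fun ω ↦ a + b * X ω + U ω; μ]
      = cov[X, (fun ω ↦ b * X ω) + U; μ] := by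
        simp_rw [add_assoc]
        exact covariance_const_add_right ((hbX.add hU).integrable one_le_two) a
    _ = b * Var[X; μ] + cov[X, U; μ] := by
        rw [covariance_add_right hX hbX hU, covariance_const_mul_right,
          covariance_self hX.aestronglyMeasurable.aemeasurable]

lemma covariance_affine_add_div_variance (hX : MemLp X 2 μ) (hU : MemLp U 2 μ)
    (hXU : cov[X, U; μ] = 0) (hVar : Var[X; μ] ≠ 0) (a b : ℝ) :
    cov[X, fun ω ↦ a + b * X ω + U ω; μ] / Var[X; μ] = b := by
  rw [covariance_affine_add_right hX hU, hXU, add_zero, mul_div_cancel_right₀ b hVar]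

end ProbabilityTheory

theorem product_method_eq_difference_method_general
    {Ω : Type*} [MeasurableSpace Ω] (P : Measure Ω) [IsProbabilityMeasure P]
    (A εy εm : Ω → ℝ)
    (hA : MemLp A 2 P) (hεy : MemLp εy 2 P) (hεm : MemLp εm 2 P)
    (hAεy : cov P A εy = 0) (hAεm : cov P A εm = 0)
    (hVarA : 0 < variance A P)
    (α0 α1 α2 β0 β1 : ℝ)
    (M Y : Ω → ℝ)
    (hM : ∀ ω, M ω = β0 + β1 * A ω + εm ω)
    (hY : ∀ ω, Y ω = α0 + α1 * A ω + α2 * M ω + εy ω) :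
    cov P A Y / variance A P = α1 + α2 * β1
    ∧ cov P A Y / variance A P - α1 = α2 * β1 := by
  have hY_affine : Y = fun ω ↦ (α0 + α2 * β0) + (α1 + α2 * β1) * A ω + (α2 * εm ω + εy ω) := by
    funext ω
    rw [hY ω, hM ω]
    ring
  have hA_noise : cov[A, fun ω ↦ α2 * εm ω + εy ω; P] = 0 := by
    change cov[A, (fun ω ↦ α2 * εm ω) + εy; P] = 0
    rw [covariance_add_right hA (hεm.const_mul α2) hεy, covariance_const_mul_right,
      ← cov_eq_covariance, ← cov_eq_covariance, hAεm, hAεy, mul_zero, add_zero]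
  have hslope : cov P A Y / variance A P = α1 + α2 * β1 := by
    rw [hY_affine, cov_eq_covariance]
    exact covariance_affine_add_div_variance hA ((hεm.const_mul α2).add hεy) hA_noise
      hVarA.ne' _ _
  exact ⟨hslope, by rw [hslope]; ring⟩

/-- In the linear structural equation model, the simple-regression slope of `Y` on `A`
is `α1 + α2·β1`; equivalently the difference-method quantity equals the
product-method quantity `α2·β1`. -/
theorem product_method_eq_difference_method
    {Ω : Type*} [MeasurableSpace Ω] (P : Measure Ω) [IsProbabilityMeasure P]
    (A εy εm : Ω → ℝ)
    (hA : MemLp A 2 P) (hεy : MemLp εy 2 P) (hεm : MemLp εm 2 P)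
    (hεy0 : ∫ ω, εy ω ∂P = 0) (hεm0 : ∫ ω, εm ω ∂P = 0)
    (hAεy : cov P A εy = 0) (hAεm : cov P A εm = 0)
    (hVarA : 0 < variance A P)
    (α0 α1 α2 β0 β1 : ℝ)
    (M Y : Ω → ℝ)
    (hM : ∀ ω, M ω = β0 + β1 * A ω + εm ω)
    (hY : ∀ ω, Y ω = α0 + α1 * A ω + α2 * M ω + εy ω) :
    cov P A Y / variance A P = α1 + α2 * β1
    ∧ cov P A Y / variance A P - α1 = α2 * β1 :=
  product_method_eq_difference_method_general P A εy εm hA hεy hεm hAεy hAεm hVarA α0 α1 α2 β0 β1 M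
    Y hM hY
end

section
/- Let A, ε_l, ε_m, ε_y : Ω → ℝ be square-integrable random variables with E[ε_l] = E[ε_m] = E[ε_y] = 0, Cov(A, ε_l) = Cov(A, ε_m) = Cov(A, ε_y) = 0, Cov(ε_m, ε_l) = Cov(ε_m, ε_y) = 0, Var(ε_l) = σ² > 0, and Cov(ε_y, ε_l) = ρ. Let α0, α2, α3, β0, β1, β2, δ0, δ1 ∈ ℝ and define L = δ0 + δ1·A + ε_l, M = β0 + β1·A + β2·L + ε_m, and Y = α0 + α2·M + α3·L + ε_y (so A has no direct effect on Y). Set c0 = α0 − δ0·ρ/σ², c1 = −δ1·ρ/σ², c2 = α3 + ρ/σ², c3 = α2, and R = Y − (c0 + c1·A + c2·L + c3·M). Then E[R] = 0 and Cov(R, A) = Cov(R, L) = Cov(R, M) = 0, so (c0, c1, c2, c3) satisfy the normal equations for the least-squares linear regression of Y on (1, A, L, M); moreover if ρ ≠ 0 and δ1 ≠ 0 then c1 = −δ1·ρ/σ² ≠ 0. -/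
open MeasureTheory ProbabilityTheory

section Covariance

variable {Ω : Type*} [MeasurableSpace Ω] {μ : Measure Ω} [IsProbabilityMeasure μ]
  {X Y Z W : Ω → ℝ}

lemma covariance_const_add_mul_add_right (hX : MemLp X 2 μ) (hY : MemLp Y 2 μ)
    (hZ : MemLp Z 2 μ) (a b : ℝ) :
    cov[X, fun ω ↦ a + b * Y ω + Z ω; μ] = b * cov[X, Y; μ] + cov[X, Z; μ] := by
  have hbY : MemLp (b • Y) 2 μ := hY.const_smul b
  have h : (fun ω ↦ a + b * Y ω + Z ω) = fun ω ↦ a + (b • Y + Z) ω := by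
    ext ω; simp [add_assoc]
  rw [h, covariance_const_add_right ((hbY.add hZ).integrable one_le_two),
    covariance_add_right hX hbY hZ, covariance_smul_right]

lemma covariance_const_add_mul_add_mul_add_right (hX : MemLp X 2 μ) (hY : MemLp Y 2 μ)
    (hZ : MemLp Z 2 μ) (hW : MemLp W 2 μ) (a b c : ℝ) :
    cov[X, fun ω ↦ a + b * Y ω + c * Z ω + W ω; μ]
      = b * cov[X, Y; μ] + c * cov[X, Z; μ] + cov[X, W; μ] := by
  have hbY : MemLp (b • Y) 2 μ := hY.const_smul b
  have hcZ : MemLp (c • Z) 2 μ := hZ.const_smul c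
  have h : (fun ω ↦ a + b * Y ω + c * Z ω + W ω) = fun ω ↦ a + (b • Y + c • Z + W) ω := by
    ext ω; simp [add_assoc]
  rw [h, covariance_const_add_right (((hbY.add hcZ).add hW).integrable one_le_two),
    covariance_add_right hX (hbY.add hcZ) hW, covariance_add_right hX hbY hcZ,
    covariance_smul_right, covariance_smul_right]

end Covariance

theorem explaining_away_regression_coefficient_general
    {Ω : Type*} [MeasurableSpace Ω] (P : Measure Ω) [IsProbabilityMeasure P]
    (A εl εm εy : Ω → ℝ)
    (hA : MemLp A 2 P) (hεl : MemLp εl 2 P) (hεm : MemLp εm 2 P) (hεy : MemLp εy 2 P)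
    (hεl0 : ∫ ω, εl ω ∂P = 0) (hεy0 : ∫ ω, εy ω ∂P = 0)
    (hAεl : cov P A εl = 0) (hAεy : cov P A εy = 0)
    (hεmεl : cov P εm εl = 0) (hεmεy : cov P εm εy = 0)
    (σ2 ρ : ℝ) (hσ2 : variance εl P = σ2) (hσ2pos : 0 < σ2)
    (hρ : cov P εy εl = ρ)
    (α0 α2 α3 β0 β1 β2 δ0 δ1 : ℝ)
    (L M Y : Ω → ℝ)
    (hL : ∀ ω, L ω = δ0 + δ1 * A ω + εl ω)
    (hM : ∀ ω, M ω = β0 + β1 * A ω + β2 * L ω + εm ω)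
    (hY : ∀ ω, Y ω = α0 + α2 * M ω + α3 * L ω + εy ω)
    (c0 c1 c2 c3 : ℝ)
    (hc0 : c0 = α0 - δ0 * ρ / σ2) (hc1 : c1 = -(δ1 * ρ / σ2))
    (hc2 : c2 = α3 + ρ / σ2) (hc3 : c3 = α2)
    (R : Ω → ℝ)
    (hR : ∀ ω, R ω = Y ω - (c0 + c1 * A ω + c2 * L ω + c3 * M ω)) :
    (∫ ω, R ω ∂P = 0)
    ∧ cov P R A = 0 ∧ cov P R L = 0 ∧ cov P R M = 0
    ∧ (ρ ≠ 0 → δ1 ≠ 0 → c1 ≠ 0) := by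
  simp only [cov_eq_covariance] at *
  have hσ2ne : σ2 ≠ 0 := hσ2pos.ne'
  have hR' : R = fun ω ↦ εy ω - ρ / σ2 * εl ω := by
    ext ω
    rw [hR, hY, hM, hL, hc0, hc1, hc2, hc3]
    field_simp
    ring
  have hL' : L = fun ω ↦ δ0 + δ1 * A ω + εl ω := funext hL
  have hM' : M = fun ω ↦ β0 + β1 * A ω + β2 * L ω + εm ω := funext hM
  have hLp : MemLp L 2 P := hL' ▸ ((memLp_const δ0).add (hA.const_mul δ1)).add hεl
  have hRp : MemLp R 2 P := hR' ▸ hεy.sub (hεl.const_mul _)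
  have hcovR : ∀ X, MemLp X 2 P → cov[R, X; P] = cov[εy, X; P] - ρ / σ2 * cov[εl, X; P] := by
    intro X hX
    rw [hR', covariance_fun_sub_left hεy (hεl.const_mul _) hX, covariance_const_mul_left]
  have hRA : cov[R, A; P] = 0 := by
    rw [hcovR A hA, covariance_comm εy, covariance_comm εl, hAεy, hAεl, mul_zero, sub_zero]
  have hRεl : cov[R, εl; P] = 0 := by
    rw [hcovR εl hεl, hρ, covariance_self hεl.aemeasurable, hσ2, div_mul_cancel₀ ρ hσ2ne,
      sub_self]
  have hRεm : cov[R, εm; P] = 0 := by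
    rw [hcovR εm hεm, covariance_comm εy, covariance_comm εl, hεmεy, hεmεl, mul_zero, sub_zero]
  have hRL : cov[R, L; P] = 0 := by
    rw [hL', covariance_const_add_mul_add_right hRp hA hεl, hRA, hRεl, mul_zero, add_zero]
  refine ⟨?_, hRA, hRL, ?_, fun hρ0 hδ1 ↦ hc1 ▸ neg_ne_zero.2 (by positivity)⟩
  · rw [hR', integral_sub (hεy.integrable one_le_two) ((hεl.integrable one_le_two).const_mul _),
      integral_const_mul, hεy0, hεl0, mul_zero, sub_zero]
  · rw [hM', covariance_const_add_mul_add_mul_add_right hRp hA hLp hεm, hRA, hRL, hRεm]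
    ring

/-- The "explaining away" phenomenon in the two-mediator model with unobserved
confounding between `L` and `Y` (encoded by `ρ = Cov(ε_y, ε_l)`): the coefficients
`c0 = α0 − δ0·ρ/σ², c1 = −δ1·ρ/σ², c2 = α3 + ρ/σ², c3 = α2` satisfy the normal
equations for the least-squares regression of `Y` on `(1, A, L, M)` (the residual `R`
has mean zero and is uncorrelated with `A`, `L`, `M`); moreover the coefficient `c1`
of `A` does not vanish when `ρ ≠ 0` and `δ1 ≠ 0`, even though `A` has no direct
effect on `Y`. -/
theorem explaining_away_regression_coefficient
    {Ω : Type*} [MeasurableSpace Ω] (P : Measure Ω) [IsProbabilityMeasure P]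
    (A εl εm εy : Ω → ℝ)
    (hA : MemLp A 2 P) (hεl : MemLp εl 2 P) (hεm : MemLp εm 2 P) (hεy : MemLp εy 2 P)
    (hεl0 : ∫ ω, εl ω ∂P = 0) (hεm0 : ∫ ω, εm ω ∂P = 0) (hεy0 : ∫ ω, εy ω ∂P = 0)
    (hAεl : cov P A εl = 0) (hAεm : cov P A εm = 0) (hAεy : cov P A εy = 0)
    (hεmεl : cov P εm εl = 0) (hεmεy : cov P εm εy = 0)
    (σ2 ρ : ℝ) (hσ2 : variance εl P = σ2) (hσ2pos : 0 < σ2)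
    (hρ : cov P εy εl = ρ)
    (α0 α2 α3 β0 β1 β2 δ0 δ1 : ℝ)
    (L M Y : Ω → ℝ)
    (hL : ∀ ω, L ω = δ0 + δ1 * A ω + εl ω)
    (hM : ∀ ω, M ω = β0 + β1 * A ω + β2 * L ω + εm ω)
    (hY : ∀ ω, Y ω = α0 + α2 * M ω + α3 * L ω + εy ω)
    (c0 c1 c2 c3 : ℝ)
    (hc0 : c0 = α0 - δ0 * ρ / σ2) (hc1 : c1 = -(δ1 * ρ / σ2))
    (hc2 : c2 = α3 + ρ / σ2) (hc3 : c3 = α2)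
    (R : Ω → ℝ)
    (hR : ∀ ω, R ω = Y ω - (c0 + c1 * A ω + c2 * L ω + c3 * M ω)) :
    (∫ ω, R ω ∂P = 0)
    ∧ cov P R A = 0 ∧ cov P R L = 0 ∧ cov P R M = 0
    ∧ (ρ ≠ 0 → δ1 ≠ 0 → c1 ≠ 0) :=
  explaining_away_regression_coefficient_general P A εl εm εy hA hεl hεm hεy hεl0 hεy0 hAεl hAεy
    hεmεl hεmεy σ2 ρ hσ2 hσ2pos hρ α0 α2 α3 β0 β1 β2 δ0 δ1 L M Y hL hM hY c0 c1 c2 c3 hc0 hc1 hc2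
    hc3 R hR
end

section
/- Let S₁, S₂, T₁, T₂ be finite types and W a measurable space. Let L₁ : Ω → S₁ and L₂ : Ω → S₂ be random variables; for each l₁ ∈ S₁ let M₁(l₁) : Ω → T₁ be a random variable; for each l₂ ∈ S₂ let M₂(l₂) : Ω → T₂ be a random variable; and for each (l₁, l₂, m₁, m₂) ∈ S₁ × S₂ × T₁ × T₂ let Y(l₁,l₂,m₁,m₂) : Ω → W be a random variable. Assume that for every (l₁, l₂, m₁, m₂), the triple ω ↦ (Y(l₁,l₂,m₁,m₂)(ω), L₁(ω), L₂(ω)) is independent of the pair ω ↦ (M₁(l₁)(ω), M₂(l₂)(ω)). Define the nested variable Z(ω) = Y(L₁(ω), L₂(ω), M₁(L₁(ω))(ω), M₂(L₂(ω))(ω))(ω). Then for every measurable set B ⊆ W, P(Z ∈ B) = Σ_{l₁,l₂,m₁,m₂} P( Y(l₁,l₂,m₁,m₂) ∈ B, L₁ = l₁, L₂ = l₂ ) · P( M₁(l₁) = m₁, M₂(l₂) = m₂ ). -/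
open MeasureTheory ProbabilityTheory

/-- Factorization of the path-specific counterfactual of the longitudinal mediation
model into well-defined interventional terms, under the cross-world independence
assumption `{Y(l₁,l₂,m₁,m₂), L₁, L₂} ⟂ {M₁(l₁), M₂(l₂)}`. -/
theorem path_specific_effect_factorization
    {Ω : Type*} [MeasurableSpace Ω] (P : Measure Ω) [IsProbabilityMeasure P]
    {S₁ : Type*} [Fintype S₁] [MeasurableSpace S₁] [MeasurableSingletonClass S₁]
    {S₂ : Type*} [Fintype S₂] [MeasurableSpace S₂] [MeasurableSingletonClass S₂]
    {T₁ : Type*} [Fintype T₁] [MeasurableSpace T₁] [MeasurableSingletonClass T₁]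
    {T₂ : Type*} [Fintype T₂] [MeasurableSpace T₂] [MeasurableSingletonClass T₂]
    {W : Type*} [MeasurableSpace W]
    (L₁ : Ω → S₁) (hL₁ : Measurable L₁)
    (L₂ : Ω → S₂) (hL₂ : Measurable L₂)
    (M₁ : S₁ → Ω → T₁) (hM₁ : ∀ l₁, Measurable (M₁ l₁))
    (M₂ : S₂ → Ω → T₂) (hM₂ : ∀ l₂, Measurable (M₂ l₂))
    (Y : S₁ → S₂ → T₁ → T₂ → Ω → W) (hY : ∀ l₁ l₂ m₁ m₂, Measurable (Y l₁ l₂ m₁ m₂))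
    (hindep : ∀ (l₁ : S₁) (l₂ : S₂) (m₁ : T₁) (m₂ : T₂),
      IndepFun (fun ω => (Y l₁ l₂ m₁ m₂ ω, L₁ ω, L₂ ω))
        (fun ω => (M₁ l₁ ω, M₂ l₂ ω)) P)
    (B : Set W) (hB : MeasurableSet B) :
    P {ω | Y (L₁ ω) (L₂ ω) (M₁ (L₁ ω) ω) (M₂ (L₂ ω) ω) ω ∈ B}
      = ∑ l₁ : S₁, ∑ l₂ : S₂, ∑ m₁ : T₁, ∑ m₂ : T₂,
          P {ω | Y l₁ l₂ m₁ m₂ ω ∈ B ∧ L₁ ω = l₁ ∧ L₂ ω = l₂}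
            * P {ω | M₁ l₁ ω = m₁ ∧ M₂ l₂ ω = m₂} := by
  classical
  set D : S₁ × S₂ × T₁ × T₂ → Set Ω := fun t =>
    {ω | Y t.1 t.2.1 t.2.2.1 t.2.2.2 ω ∈ B ∧ L₁ ω = t.1 ∧ L₂ ω = t.2.1}
      ∩ {ω | M₁ t.1 ω = t.2.2.1 ∧ M₂ t.2.1 ω = t.2.2.2} with hD
  have hAmeas : ∀ t : S₁ × S₂ × T₁ × T₂,
      MeasurableSet {ω | Y t.1 t.2.1 t.2.2.1 t.2.2.2 ω ∈ B ∧ L₁ ω = t.1 ∧ L₂ ω = t.2.1} := by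
    intro t
    exact ((hY _ _ _ _ hB).inter
      ((hL₁ (MeasurableSet.singleton t.1)).inter (hL₂ (MeasurableSet.singleton t.2.1))))
  have hCmeas : ∀ t : S₁ × S₂ × T₁ × T₂,
      MeasurableSet {ω | M₁ t.1 ω = t.2.2.1 ∧ M₂ t.2.1 ω = t.2.2.2} := by
    intro t
    exact ((hM₁ t.1 (MeasurableSet.singleton t.2.2.1)).inter
      (hM₂ t.2.1 (MeasurableSet.singleton t.2.2.2)))
  have hunion : {ω | Y (L₁ ω) (L₂ ω) (M₁ (L₁ ω) ω) (M₂ (L₂ ω) ω) ω ∈ B} = ⋃ t, D t := by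
    ext ω
    simp only [Set.mem_iUnion, hD, Set.mem_inter_iff, Set.mem_setOf_eq]
    constructor
    · intro h
      exact ⟨(L₁ ω, L₂ ω, M₁ (L₁ ω) ω, M₂ (L₂ ω) ω), ⟨h, rfl, rfl⟩, rfl, rfl⟩
    · rintro ⟨⟨a, b, c, d⟩, ⟨hY', rfl, rfl⟩, h3, h4⟩
      dsimp only at hY' h3 h4 ⊢
      rw [h3, h4]; exact hY'
  have hdisj : Pairwise (Function.onFun Disjoint D) := by
    rintro ⟨l₁, l₂, m₁, m₂⟩ ⟨l₁', l₂', m₁', m₂'⟩ hne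
    simp only [Function.onFun, Set.disjoint_left]
    rintro ω ⟨⟨_, h1, h2⟩, h3, h4⟩ ⟨⟨_, h1', h2'⟩, h3', h4'⟩
    apply hne
    simp_all
  have hfact : ∀ t : S₁ × S₂ × T₁ × T₂,
      P (D t) = P {ω | Y t.1 t.2.1 t.2.2.1 t.2.2.2 ω ∈ B ∧ L₁ ω = t.1 ∧ L₂ ω = t.2.1}
        * P {ω | M₁ t.1 ω = t.2.2.1 ∧ M₂ t.2.1 ω = t.2.2.2} := by
    rintro ⟨l₁, l₂, m₁, m₂⟩
    have h := (hindep l₁ l₂ m₁ m₂).measure_inter_preimage_eq_mul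
      (s := B ×ˢ ({l₁} ×ˢ {l₂})) (t := {m₁} ×ˢ {m₂})
      (hB.prod ((MeasurableSet.singleton l₁).prod (MeasurableSet.singleton l₂)))
      ((MeasurableSet.singleton m₁).prod (MeasurableSet.singleton m₂))
    have e1 : (fun ω => (Y l₁ l₂ m₁ m₂ ω, L₁ ω, L₂ ω)) ⁻¹' (B ×ˢ ({l₁} ×ˢ {l₂}))
        = {ω | Y l₁ l₂ m₁ m₂ ω ∈ B ∧ L₁ ω = l₁ ∧ L₂ ω = l₂} := by
      ext ω; simp only [Set.mem_preimage, Set.mem_prod, Set.mem_singleton_iff, Set.mem_setOf_eq]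
    have e2 : (fun ω => (M₁ l₁ ω, M₂ l₂ ω)) ⁻¹' ({m₁} ×ˢ {m₂})
        = {ω | M₁ l₁ ω = m₁ ∧ M₂ l₂ ω = m₂} := by
      ext ω; simp only [Set.mem_preimage, Set.mem_prod, Set.mem_singleton_iff, Set.mem_setOf_eq]
    rw [e1, e2] at h
    exact h
  rw [hunion, measure_iUnion hdisj (fun t => (hAmeas t).inter (hCmeas t)), tsum_fintype]
  rw [Fintype.sum_prod_type]
  refine Finset.sum_congr rfl fun l₁ _ => ?_
  rw [Fintype.sum_prod_type]
  refine Finset.sum_congr rfl fun l₂ _ => ?_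
  rw [Fintype.sum_prod_type]
  refine Finset.sum_congr rfl fun m₁ _ => ?_
  refine Finset.sum_congr rfl fun m₂ _ => ?_
  exact hfact (l₁, l₂, m₁, m₂)
end

section
/- Let S_{A₀}, S_{A₁}, S_L, S_M be finite types. Let A₀ : Ω → S_{A₀}, L₁ : Ω → S_L, M₁ : Ω → S_M, A₁ : Ω → S_{A₁} and Y : Ω → ℝ be random variables with Y integrable, and fix target values a₀ ∈ S_{A₀}, a₁ ∈ S_{A₁}. Let Lᵃ : Ω → S_L, Mᵃ : Ω → S_M and Yᵃ : Ω → ℝ be potential outcomes (representing L₁(a₀), M₁(a₀) and Y(a₀,a₁)), with Yᵃ integrable, satisfying consistency: L₁(ω) = Lᵃ(ω) and M₁(ω) = Mᵃ(ω) whenever A₀(ω) = a₀, and Y(ω) = Yᵃ(ω) whenever A₀(ω) = a₀ and A₁(ω) = a₁. Assume: (i) the triple ω ↦ (Lᵃ(ω), Mᵃ(ω), Yᵃ(ω)) is independent of A₀; (ii) sequential ignorability: for every l ∈ S_L and m ∈ S_M with P(E_{l,m}) > 0, where E_{l,m} = {A₀ = a₀, L₁ = l, M₁ = m}, and every measurable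 B ⊆ ℝ, P(Yᵃ ∈ B, A₁ = a₁ | E_{l,m}) = P(Yᵃ ∈ B | E_{l,m}) · P(A₁ = a₁ | E_{l,m}); (iii) positivity: P(A₀ = a₀) > 0 and P(A₁ = a₁ | E_{l,m}) > 0 whenever P(E_{l,m}) > 0. Then E[Yᵃ] = Σ_{(l,m) : P(E_{l,m}) > 0} E[Y | A₀ = a₀, L₁ = l, M₁ = m, A₁ = a₁] · P(L₁ = l, M₁ = m | A₀ = a₀). -/
/-!
Since `Yᵃ` is independent of `A₀`, conditioning on `A₀ = a₀` does not change `E[Yᵃ]`. The law of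
total expectation then splits `E[Yᵃ | A₀ = a₀]` over the cells `{L₁ = l, M₁ = m}`. Within a cell,
sequential ignorability lets us condition further on `A₁ = a₁` without changing the mean of `Yᵃ`,
and on that event consistency replaces `Yᵃ` by the observed `Y`.
-/

open MeasureTheory ProbabilityTheory

namespace ProbabilityTheory

variable {Ω : Type*} [MeasurableSpace Ω] {μ : Measure Ω} [IsFiniteMeasure μ]

lemma integral_cond_eq_integral_of_measure_inter_eq_mul {f : Ω → ℝ} {T : Set Ω}
    (hf : Measurable f) (hT : μ T ≠ 0)
    (hindep : ∀ B, MeasurableSet B → μ (f ⁻¹' B ∩ T) = μ (f ⁻¹' B) * μ T) :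
    ∫ ω, f ω ∂μ[|T] = ∫ ω, f ω ∂μ := by
  have hlaw : (μ[|T]).map f = μ.map f := by
    ext B hB
    rw [Measure.map_apply hf hB, Measure.map_apply hf hB, cond_apply' (hf hB), Set.inter_comm,
      hindep B hB, mul_comm (μ _), ENNReal.inv_mul_cancel_left hT (measure_ne_top μ T)]
  calc ∫ ω, f ω ∂μ[|T] = ∫ y, y ∂(μ[|T]).map f :=
        (integral_map hf.aemeasurable aestronglyMeasurable_id).symm
    _ = ∫ y, y ∂μ.map f := by rw [hlaw]
    _ = ∫ ω, f ω ∂μ := integral_map hf.aemeasurable aestronglyMeasurable_id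

lemma integral_cond_inter_eq_integral_cond {f g : Ω → ℝ} {E T : Set Ω} (hE : MeasurableSet E)
    (hT : MeasurableSet T) (hg : Measurable g) (hET : μ[T | E] ≠ 0)
    (hfg : ∀ ω ∈ E ∩ T, f ω = g ω)
    (hindep : ∀ B, MeasurableSet B → μ[g ⁻¹' B ∩ T | E] = μ[g ⁻¹' B | E] * μ[T | E]) :
    ∫ ω, f ω ∂μ[|E ∩ T] = ∫ ω, g ω ∂μ[|E] := by
  rw [integral_congr_ae (ae_cond_of_forall_mem (hE.inter hT) hfg),
    ← cond_cond_eq_cond_inter hE hT]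
  exact integral_cond_eq_integral_of_measure_inter_eq_mul hg hET hindep

variable {E : Type*} [NormedAddCommGroup E] [NormedSpace ℝ E]

lemma setIntegral_eq_measureReal_smul_integral_cond (f : Ω → E) (s : Set Ω) :
    ∫ ω in s, f ω ∂μ = μ.real s • ∫ ω, f ω ∂μ[|s] := by
  rcases eq_or_ne (μ s) 0 with hs | hs
  · simp [Measure.restrict_eq_zero.mpr hs, measureReal_def, hs]
  · rw [cond, integral_smul_measure, smul_smul, ENNReal.toReal_inv, ← measureReal_def,
      mul_inv_cancel₀ ((measureReal_ne_zero_iff).mpr hs), one_smul]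

lemma integral_eq_sum_measureReal_smul_integral_cond_fiber {α : Type*} [Fintype α]
    [MeasurableSpace α] [MeasurableSingletonClass α] {X : Ω → α} (hX : Measurable X)
    {f : Ω → E} (hf : Integrable f μ) :
    ∫ ω, f ω ∂μ = ∑ x, μ.real (X ⁻¹' {x}) • ∫ ω, f ω ∂μ[|X ← x] := by
  have hfibers : (⋃ x, X ⁻¹' {x}) = Set.univ := by ext; simp
  simp_rw [← setIntegral_eq_measureReal_smul_integral_cond]
  rw [← integral_iUnion_fintype (fun x => hX (measurableSet_singleton x))
    (pairwise_disjoint_fiber X) (fun _ => hf.integrableOn), hfibers, Measure.restrict_univ]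

end ProbabilityTheory

open scoped Classical in
theorem g_formula_two_treatments_general
    {Ω : Type*} [MeasurableSpace Ω] (P : Measure Ω) [IsProbabilityMeasure P]
    {SA₀ : Type*} [Fintype SA₀] [MeasurableSpace SA₀] [MeasurableSingletonClass SA₀]
    {SA₁ : Type*} [Fintype SA₁] [MeasurableSpace SA₁] [MeasurableSingletonClass SA₁]
    {SL : Type*} [Fintype SL] [MeasurableSpace SL] [MeasurableSingletonClass SL]
    {SM : Type*} [Fintype SM] [MeasurableSpace SM] [MeasurableSingletonClass SM]
    (A₀ : Ω → SA₀) (hA₀ : Measurable A₀)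
    (L₁ : Ω → SL) (hL₁ : Measurable L₁)
    (M₁ : Ω → SM) (hM₁ : Measurable M₁)
    (A₁ : Ω → SA₁) (hA₁ : Measurable A₁)
    (Y : Ω → ℝ)
    (a₀ : SA₀) (a₁ : SA₁)
    (La : Ω → SL)
    (Ma : Ω → SM)
    (Ya : Ω → ℝ) (hYa : Measurable Ya) (hYaInt : Integrable Ya P)
    (hconsY : ∀ ω, A₀ ω = a₀ → A₁ ω = a₁ → Y ω = Ya ω)
    (hign₀ : IndepFun (fun ω => (La ω, Ma ω, Ya ω)) A₀ P)
    (hseqIgn : ∀ (l : SL) (m : SM),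
      0 < P {ω | A₀ ω = a₀ ∧ L₁ ω = l ∧ M₁ ω = m} →
      ∀ (B : Set ℝ), MeasurableSet B →
        P[|{ω | A₀ ω = a₀ ∧ L₁ ω = l ∧ M₁ ω = m}] {ω | Ya ω ∈ B ∧ A₁ ω = a₁}
          = P[|{ω | A₀ ω = a₀ ∧ L₁ ω = l ∧ M₁ ω = m}] {ω | Ya ω ∈ B}
            * P[|{ω | A₀ ω = a₀ ∧ L₁ ω = l ∧ M₁ ω = m}] {ω | A₁ ω = a₁})
    (hpos₀ : 0 < P {ω | A₀ ω = a₀})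
    (hpos₁ : ∀ (l : SL) (m : SM),
      0 < P {ω | A₀ ω = a₀ ∧ L₁ ω = l ∧ M₁ ω = m} →
      0 < P[|{ω | A₀ ω = a₀ ∧ L₁ ω = l ∧ M₁ ω = m}] {ω | A₁ ω = a₁}) :
    ∫ ω, Ya ω ∂P
      = ∑ l : SL, ∑ m : SM,
          if 0 < P {ω | A₀ ω = a₀ ∧ L₁ ω = l ∧ M₁ ω = m} then
            (∫ ω, Y ω ∂P[|{ω | A₀ ω = a₀ ∧ L₁ ω = l ∧ M₁ ω = m ∧ A₁ ω = a₁}])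
              * (P[|{ω | A₀ ω = a₀}] {ω | L₁ ω = l ∧ M₁ ω = m}).toReal
          else 0 := by
  set s₀ : Set Ω := {ω | A₀ ω = a₀}
  have hs₀ : MeasurableSet s₀ := hA₀ (measurableSet_singleton a₀)
  have hX : Measurable fun ω => (L₁ ω, M₁ ω) := hL₁.prodMk hM₁
  have hrandom : ∫ ω, Ya ω ∂P[|s₀] = ∫ ω, Ya ω ∂P :=
    integral_cond_eq_integral_of_measure_inter_eq_mul hYa hpos₀.ne' fun B hB =>
      (hign₀.comp (measurable_snd.comp measurable_snd) measurable_id).measure_inter_preimage_eq_mul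
        B {a₀} hB (measurableSet_singleton a₀)
  rw [← hrandom, integral_eq_sum_measureReal_smul_integral_cond_fiber (μ := P[|s₀]) hX
    (hYaInt.restrict.smul_measure (ENNReal.inv_ne_top.mpr hpos₀.ne')), Fintype.sum_prod_type]
  refine Finset.sum_congr rfl fun l _ => Finset.sum_congr rfl fun m _ => ?_
  have hfiber : (fun ω => (L₁ ω, M₁ ω)) ⁻¹' {(l, m)} = {ω | L₁ ω = l ∧ M₁ ω = m} := by
    ext; simp
  rw [cond_cond_eq_cond_inter hs₀ (hX (measurableSet_singleton _)), hfiber, smul_eq_mul,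
    mul_comm, measureReal_def]
  set E : Set Ω := {ω | A₀ ω = a₀ ∧ L₁ ω = l ∧ M₁ ω = m}
  have hE : MeasurableSet E :=
    hs₀.inter ((hL₁ (measurableSet_singleton l)).inter (hM₁ (measurableSet_singleton m)))
  rw [show s₀ ∩ {ω | L₁ ω = l ∧ M₁ ω = m} = E from rfl]
  have hT : MeasurableSet {ω | A₁ ω = a₁} := hA₁ (measurableSet_singleton a₁)
  have hET : E ∩ {ω | A₁ ω = a₁} = {ω | A₀ ω = a₀ ∧ L₁ ω = l ∧ M₁ ω = m ∧ A₁ ω = a₁} := by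
    ext; simp [E, and_assoc]
  split_ifs with hpos
  · rw [← hET, integral_cond_inter_eq_integral_cond hE hT hYa
      (hpos₁ l m hpos).ne' (fun ω hω => hconsY ω hω.1.1 hω.2) (hseqIgn l m hpos)]
  · simp [cond_eq_zero_of_meas_eq_zero (nonpos_iff_eq_zero.mp (not_lt.mp hpos))]

open scoped Classical in
/-- The g-formula for the total effect of two sequential treatments:
`E[Y(a₀,a₁)] = Σ_{l,m} E[Y | A₀ = a₀, L₁ = l, M₁ = m, A₁ = a₁] · P(L₁ = l, M₁ = m | A₀ = a₀)`,
under consistency, randomization of `A₀`, sequential ignorability of `A₁`, and positivity. -/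
theorem g_formula_two_treatments
    {Ω : Type*} [MeasurableSpace Ω] (P : Measure Ω) [IsProbabilityMeasure P]
    {SA₀ : Type*} [Fintype SA₀] [MeasurableSpace SA₀] [MeasurableSingletonClass SA₀]
    {SA₁ : Type*} [Fintype SA₁] [MeasurableSpace SA₁] [MeasurableSingletonClass SA₁]
    {SL : Type*} [Fintype SL] [MeasurableSpace SL] [MeasurableSingletonClass SL]
    {SM : Type*} [Fintype SM] [MeasurableSpace SM] [MeasurableSingletonClass SM]
    (A₀ : Ω → SA₀) (hA₀ : Measurable A₀)
    (L₁ : Ω → SL) (hL₁ : Measurable L₁)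
    (M₁ : Ω → SM) (hM₁ : Measurable M₁)
    (A₁ : Ω → SA₁) (hA₁ : Measurable A₁)
    (Y : Ω → ℝ) (hY : Measurable Y) (hYint : Integrable Y P)
    (a₀ : SA₀) (a₁ : SA₁)
    (La : Ω → SL) (hLa : Measurable La)
    (Ma : Ω → SM) (hMa : Measurable Ma)
    (Ya : Ω → ℝ) (hYa : Measurable Ya) (hYaInt : Integrable Ya P)
    (hconsL : ∀ ω, A₀ ω = a₀ → L₁ ω = La ω)
    (hconsM : ∀ ω, A₀ ω = a₀ → M₁ ω = Ma ω)
    (hconsY : ∀ ω, A₀ ω = a₀ → A₁ ω = a₁ → Y ω = Ya ω)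
    (hign₀ : IndepFun (fun ω => (La ω, Ma ω, Ya ω)) A₀ P)
    (hseqIgn : ∀ (l : SL) (m : SM),
      0 < P {ω | A₀ ω = a₀ ∧ L₁ ω = l ∧ M₁ ω = m} →
      ∀ (B : Set ℝ), MeasurableSet B →
        P[|{ω | A₀ ω = a₀ ∧ L₁ ω = l ∧ M₁ ω = m}] {ω | Ya ω ∈ B ∧ A₁ ω = a₁}
          = P[|{ω | A₀ ω = a₀ ∧ L₁ ω = l ∧ M₁ ω = m}] {ω | Ya ω ∈ B}
            * P[|{ω | A₀ ω = a₀ ∧ L₁ ω = l ∧ M₁ ω = m}] {ω | A₁ ω = a₁})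
    (hpos₀ : 0 < P {ω | A₀ ω = a₀})
    (hpos₁ : ∀ (l : SL) (m : SM),
      0 < P {ω | A₀ ω = a₀ ∧ L₁ ω = l ∧ M₁ ω = m} →
      0 < P[|{ω | A₀ ω = a₀ ∧ L₁ ω = l ∧ M₁ ω = m}] {ω | A₁ ω = a₁}) :
    ∫ ω, Ya ω ∂P
      = ∑ l : SL, ∑ m : SM,
          if 0 < P {ω | A₀ ω = a₀ ∧ L₁ ω = l ∧ M₁ ω = m} then
            (∫ ω, Y ω ∂P[|{ω | A₀ ω = a₀ ∧ L₁ ω = l ∧ M₁ ω = m ∧ A₁ ω = a₁}])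
              * (P[|{ω | A₀ ω = a₀}] {ω | L₁ ω = l ∧ M₁ ω = m}).toReal
          else 0 :=
  g_formula_two_treatments_general P A₀ hA₀ L₁ hL₁ M₁ hM₁ A₁ hA₁ Y a₀ a₁ La Ma Ya hYa hYaInt hconsY
    hign₀ hseqIgn hpos₀ hpos₁
end

section
/- Let S_M and S_L be finite types. Let A : Ω → {0,1}, L : Ω → S_L, M : Ω → S_M and Y : Ω → ℝ be random variables with Y integrable. Let potential outcomes M₀ : Ω → S_M (representing M(0)), L₁ : Ω → S_L (representing L(1)) and, for each m ∈ S_M, Y₁ₘ : Ω → ℝ (representing Y(1,m)), each Y₁ₘ integrable, satisfy consistency: M(ω) = M₀(ω) whenever A(ω) = 0; L(ω) = L₁(ω) whenever A(ω) = 1; and Y(ω) = Y₁ₘ(ω) whenever A(ω) = 1 and M(ω) = m. Assume: (i) cross-world assumption: for every m, Y₁ₘ is independent of M₀; (ii) randomization: for every m, the triple ω ↦ (Y₁ₘ(ω), L₁(ω), M₀(ω)) is independent of A; (iii) for every m ∈ S_M and l ∈ S_L, conditionally on the event F_l = {A = 1, L = l}, Y₁ₘ is independent of M, i.e. for every measurable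 B ⊆ ℝ and m' ∈ S_M, P(Y₁ₘ ∈ B, M = m' | F_l) = P(Y₁ₘ ∈ B | F_l) · P(M = m' | F_l); (iv) positivity: P(A = 0) > 0 and P(A = 1, L = l, M = m) > 0 for all l ∈ S_L, m ∈ S_M; (v) the composed variable ω ↦ Y₁_{M₀(ω)}(ω) is integrable. Then E[ω ↦ Y₁_{M₀(ω)}(ω)] = Σ_{m ∈ S_M} ( Σ_{l ∈ S_L} E[Y | M = m, L = l, A = 1] · P(L = l | A = 1) ) · P(M = m | A = 0). -/
/-!
Cross-world independence of `Y(1,m)` and `M(0)` gives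
`E[Y(1,M(0))] = Σ_m E[Y(1,m)] P(M(0) = m)`. Randomization makes `Y(1,m)` and `M(0)` independent
of `A`, so `P(M(0) = m) = P(M = m | A = 0)` by consistency, and
`E[Y(1,m)] = E[Y(1,m) | A = 1] = Σ_l P(L = l | A = 1) E[Y(1,m) | A = 1, L = l]`.
Given `A = 1, L = l`, the outcome `Y(1,m)` is independent of `M`, so one may further condition on
`M = m`, where consistency replaces `Y(1,m)` by the observed `Y`.
-/

open MeasureTheory ProbabilityTheory

namespace ProbabilityTheory

variable {Ω β κ E : Type*} [MeasurableSpace Ω] [MeasurableSpace β] {μ : Measure Ω}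

theorem identDistrib_cond_of_measure_inter_preimage_eq_mul [IsFiniteMeasure μ] {X : Ω → β}
    {S : Set Ω} (hX : Measurable X) (hS : MeasurableSet S) (hS₀ : μ S ≠ 0)
    (h : ∀ B, MeasurableSet B → μ (X ⁻¹' B ∩ S) = μ (X ⁻¹' B) * μ S) :
    IdentDistrib X X μ[|S] μ where
  aemeasurable_fst := hX.aemeasurable
  aemeasurable_snd := hX.aemeasurable
  map_eq := by
    ext B hB
    rw [Measure.map_apply hX hB, Measure.map_apply hX hB, cond_apply hS, Set.inter_comm,
      h B hB, mul_comm, mul_assoc, ENNReal.mul_inv_cancel hS₀ (measure_ne_top μ S), mul_one]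

theorem IndepFun.identDistrib_cond [IsFiniteMeasure μ] {γ : Type*} [MeasurableSpace γ]
    {X : Ω → β} {Z : Ω → γ} (hXZ : IndepFun X Z μ) (hX : Measurable X) (hZ : Measurable Z)
    {t : Set γ} (ht : MeasurableSet t) (ht₀ : μ (Z ⁻¹' t) ≠ 0) :
    IdentDistrib X X μ[|Z ⁻¹' t] μ :=
  identDistrib_cond_of_measure_inter_preimage_eq_mul hX (hZ ht) ht₀
    fun B hB => hXZ.measure_inter_preimage_eq_mul B t hB ht

variable [NormedAddCommGroup E] [NormedSpace ℝ E]
variable [Fintype κ] [MeasurableSpace κ] [DiscreteMeasurableSpace κ]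

theorem integral_eq_sum_measureReal_smul_integral_cond [IsFiniteMeasure μ] {Z : Ω → κ}
    (hZ : Measurable Z) {f : Ω → E} (hf : Integrable f μ) :
    ∫ ω, f ω ∂μ = ∑ k, μ.real (Z ⁻¹' {k}) • ∫ ω, f ω ∂μ[|Z ⁻¹' {k}] := by
  rw [← sum_meas_smul_cond_fiber hZ μ] at hf
  conv_lhs => rw [← sum_meas_smul_cond_fiber hZ μ]
  rw [integral_finsetSum_measure fun k _ => integrable_finsetSum_measure.1 hf k
    (Finset.mem_univ k)]
  simp only [integral_smul_measure, measureReal_def]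

theorem integral_apply_eq_sum_measureReal_smul_integral [IsFiniteMeasure μ]
    [MeasurableSpace E] [BorelSpace E]
    {Z : Ω → κ} {Y : κ → Ω → E} (hZ : Measurable Z) (hY : ∀ k, Measurable (Y k))
    (hYZ : ∀ k, IndepFun (Y k) Z μ) (hint : Integrable (fun ω => Y (Z ω) ω) μ) :
    ∫ ω, Y (Z ω) ω ∂μ = ∑ k, μ.real (Z ⁻¹' {k}) • ∫ ω, Y k ω ∂μ := by
  rw [integral_eq_sum_measureReal_smul_integral_cond hZ hint]
  refine Finset.sum_congr rfl fun k _ => ?_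
  rcases eq_or_ne (μ (Z ⁻¹' {k})) 0 with h₀ | h₀
  · simp [measureReal_def, h₀]
  have hYk : ∀ ω ∈ Z ⁻¹' {k}, Y (Z ω) ω = Y k ω := fun ω (hω : Z ω = k) => by rw [hω]
  rw [integral_congr_ae (ae_cond_of_forall_mem (hZ (.singleton k)) hYk),
    ((hYZ k).identDistrib_cond (hY k) hZ (.singleton k) h₀).integral_eq]

theorem integral_eq_sum_measureReal_cond_smul_integral_cond_inter [IsProbabilityMeasure μ]
    [MeasurableSpace E] [BorelSpace E] {X : Ω → E} {L : Ω → κ} {S T : Set Ω}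
    (hX : Measurable X) (hXint : Integrable X μ) (hL : Measurable L)
    (hS : MeasurableSet S) (hT : MeasurableSet T)
    (hXS : ∀ B, MeasurableSet B → μ (X ⁻¹' B ∩ S) = μ (X ⁻¹' B) * μ S)
    (hXT : ∀ l B, MeasurableSet B → μ[X ⁻¹' B ∩ T | S ∩ L ⁻¹' {l}]
      = μ[X ⁻¹' B | S ∩ L ⁻¹' {l}] * μ[T | S ∩ L ⁻¹' {l}])
    (hpos : ∀ l, μ (S ∩ L ⁻¹' {l} ∩ T) ≠ 0) :
    ∫ ω, X ω ∂μ = ∑ l, μ[|S].real (L ⁻¹' {l}) • ∫ ω, X ω ∂μ[|S ∩ L ⁻¹' {l} ∩ T] := by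
  obtain ⟨ω⟩ := nonempty_of_isProbabilityMeasure μ
  have hS₀ : μ S ≠ 0 := fun h =>
    hpos (L ω) (measure_mono_null (Set.inter_subset_left.trans Set.inter_subset_left) h)
  have hlaw := identDistrib_cond_of_measure_inter_preimage_eq_mul hX hS hS₀ hXS
  rw [← hlaw.integral_eq, integral_eq_sum_measureReal_smul_integral_cond hL
    (hlaw.symm.integrable_snd hXint)]
  refine Finset.sum_congr rfl fun l _ => ?_
  have hSL : MeasurableSet (S ∩ L ⁻¹' {l}) := hS.inter (hL (.singleton l))
  rw [cond_cond_eq_cond_inter hS (hL (.singleton l)),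
    ← cond_cond_eq_cond_inter hSL hT,
    (identDistrib_cond_of_measure_inter_preimage_eq_mul hX hT
      (cond_pos_of_inter_ne_zero hSL (hpos l)).ne' (hXT l)).integral_eq]

end ProbabilityTheory

theorem two_mediator_nested_outcome_identification_general
    {Ω : Type*} [MeasurableSpace Ω] (P : Measure Ω) [IsProbabilityMeasure P]
    {SM : Type*} [Fintype SM] [MeasurableSpace SM] [MeasurableSingletonClass SM]
    {SL : Type*} [Fintype SL] [MeasurableSpace SL] [MeasurableSingletonClass SL]
    (A : Ω → Fin 2) (hA : Measurable A)
    (L : Ω → SL) (hL : Measurable L)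
    (M : Ω → SM) (hM : Measurable M)
    (Y : Ω → ℝ)
    (M₀ : Ω → SM) (hM₀ : Measurable M₀)
    (L₁ : Ω → SL)
    (Y₁ : SM → Ω → ℝ) (hY₁ : ∀ m, Measurable (Y₁ m)) (hY₁int : ∀ m, Integrable (Y₁ m) P)
    (hconsM : ∀ ω, A ω = 0 → M ω = M₀ ω)
    (hconsY : ∀ ω, A ω = 1 → Y ω = Y₁ (M ω) ω)
    (hcross : ∀ m : SM, IndepFun (Y₁ m) M₀ P)
    (hrand : ∀ m : SM, IndepFun (fun ω => (Y₁ m ω, L₁ ω, M₀ ω)) A P)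
    (hcondIndep : ∀ (m : SM) (l : SL) (B : Set ℝ), MeasurableSet B → ∀ m' : SM,
      P[|{ω | A ω = 1 ∧ L ω = l}] {ω | Y₁ m ω ∈ B ∧ M ω = m'}
        = P[|{ω | A ω = 1 ∧ L ω = l}] {ω | Y₁ m ω ∈ B}
          * P[|{ω | A ω = 1 ∧ L ω = l}] {ω | M ω = m'})
    (hpos₀ : 0 < P {ω | A ω = 0})
    (hpos : ∀ (l : SL) (m : SM), 0 < P {ω | A ω = 1 ∧ L ω = l ∧ M ω = m})
    (hNestInt : Integrable (fun ω => Y₁ (M₀ ω) ω) P) :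
    ∫ ω, Y₁ (M₀ ω) ω ∂P
      = ∑ m : SM,
          (∑ l : SL,
            (∫ ω, Y ω ∂P[|{ω | M ω = m ∧ L ω = l ∧ A ω = 1}])
              * (P[|{ω | A ω = 1}] {ω | L ω = l}).toReal)
          * (P[|{ω | A ω = 0}] {ω | M ω = m}).toReal := by
  rw [integral_apply_eq_sum_measureReal_smul_integral hM₀ hY₁ hcross hNestInt]
  refine Finset.sum_congr rfl fun m _ => ?_
  have hM₀A : IndepFun M₀ A P :=
    (hrand m).comp (measurable_snd.comp measurable_snd) measurable_id
  have hY₁A : IndepFun (Y₁ m) A P := (hrand m).comp measurable_fst measurable_id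
  have hlaw : P[{ω | M ω = m} | {ω | A ω = 0}] = P (M₀ ⁻¹' {m}) :=
    ((IdentDistrib.of_ae_eq hM.aemeasurable
      (ae_cond_of_forall_mem (hA (.singleton 0)) hconsM)).trans
      (hM₀A.identDistrib_cond hM₀ hA (.singleton 0) hpos₀.ne')).measure_mem_eq
      (.singleton m)
  rw [smul_eq_mul, mul_comm, measureReal_def, ← hlaw,
    integral_eq_sum_measureReal_cond_smul_integral_cond_inter (hY₁ m) (hY₁int m) hL
      (hA (.singleton 1)) (hM (.singleton m))
      (fun B hB => hY₁A.measure_inter_preimage_eq_mul B {1} hB (.singleton 1))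
      (fun l B hB => hcondIndep m l B hB m)
      (fun l => by rw [Set.inter_assoc]; exact (hpos l m).ne')]
  congr 1
  refine Finset.sum_congr rfl fun l _ => ?_
  set G := A ⁻¹' {1} ∩ L ⁻¹' {l} ∩ M ⁻¹' {m}
  have hG : G = {ω | M ω = m ∧ L ω = l ∧ A ω = 1} :=
    Set.ext fun ω => ⟨fun ⟨⟨ha, hl⟩, hm⟩ => ⟨hm, hl, ha⟩, fun ⟨hm, hl, ha⟩ => ⟨⟨ha, hl⟩, hm⟩⟩
  have hG_meas : MeasurableSet G :=
    ((hA (.singleton 1)).inter (hL (.singleton l))).inter (hM (.singleton m))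
  have hY₁_eq_Y : ∀ ω ∈ G, Y₁ m ω = Y ω := fun ω ⟨⟨ha, _⟩, hm⟩ => by rw [hconsY ω ha, hm]
  rw [smul_eq_mul, mul_comm, measureReal_def,
    integral_congr_ae (ae_cond_of_forall_mem hG_meas hY₁_eq_Y), hG]
  rfl

/-- Identification of the nested potential outcome `E[Y(1, M(0))]` in the two-mediator
model with randomized treatment `A`, mediators `L` and `M`, and unobserved confounding
between `L` and `Y`:
`E[Y(1,M(0))] = Σ_m (Σ_l E[Y | M = m, L = l, A = 1] · P(L = l | A = 1)) · P(M = m | A = 0)`. -/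
theorem two_mediator_nested_outcome_identification
    {Ω : Type*} [MeasurableSpace Ω] (P : Measure Ω) [IsProbabilityMeasure P]
    {SM : Type*} [Fintype SM] [MeasurableSpace SM] [MeasurableSingletonClass SM]
    {SL : Type*} [Fintype SL] [MeasurableSpace SL] [MeasurableSingletonClass SL]
    (A : Ω → Fin 2) (hA : Measurable A)
    (L : Ω → SL) (hL : Measurable L)
    (M : Ω → SM) (hM : Measurable M)
    (Y : Ω → ℝ) (hY : Measurable Y) (hYint : Integrable Y P)
    (M₀ : Ω → SM) (hM₀ : Measurable M₀)
    (L₁ : Ω → SL) (hL₁ : Measurable L₁)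
    (Y₁ : SM → Ω → ℝ) (hY₁ : ∀ m, Measurable (Y₁ m)) (hY₁int : ∀ m, Integrable (Y₁ m) P)
    (hconsM : ∀ ω, A ω = 0 → M ω = M₀ ω)
    (hconsL : ∀ ω, A ω = 1 → L ω = L₁ ω)
    (hconsY : ∀ ω, A ω = 1 → Y ω = Y₁ (M ω) ω)
    (hcross : ∀ m : SM, IndepFun (Y₁ m) M₀ P)
    (hrand : ∀ m : SM, IndepFun (fun ω => (Y₁ m ω, L₁ ω, M₀ ω)) A P)
    (hcondIndep : ∀ (m : SM) (l : SL) (B : Set ℝ), MeasurableSet B → ∀ m' : SM,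
      P[|{ω | A ω = 1 ∧ L ω = l}] {ω | Y₁ m ω ∈ B ∧ M ω = m'}
        = P[|{ω | A ω = 1 ∧ L ω = l}] {ω | Y₁ m ω ∈ B}
          * P[|{ω | A ω = 1 ∧ L ω = l}] {ω | M ω = m'})
    (hpos₀ : 0 < P {ω | A ω = 0})
    (hpos : ∀ (l : SL) (m : SM), 0 < P {ω | A ω = 1 ∧ L ω = l ∧ M ω = m})
    (hNestInt : Integrable (fun ω => Y₁ (M₀ ω) ω) P) :
    ∫ ω, Y₁ (M₀ ω) ω ∂P
      = ∑ m : SM,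
          (∑ l : SL,
            (∫ ω, Y ω ∂P[|{ω | M ω = m ∧ L ω = l ∧ A ω = 1}])
              * (P[|{ω | A ω = 1}] {ω | L ω = l}).toReal)
          * (P[|{ω | A ω = 0}] {ω | M ω = m}).toReal :=
  two_mediator_nested_outcome_identification_general P A hA L hL M hM Y M₀ hM₀ L₁ Y₁ hY₁ hY₁int
    hconsM hconsY hcross hrand hcondIndep hpos₀ hpos hNestInt
end

section
/- Let S be a countable type with measurable singletons. Let A : Ω → S be a random variable, let (Y_a)_{a ∈ S} be a family of integrable random variables Y_a : Ω → ℝ (potential outcomes), and let Y : Ω → ℝ be integrable and satisfy consistency: Y(ω) = Y_{A(ω)}(ω) for all ω. Fix a ∈ S with P(A = a) > 0 and assume Y_a is independent of A. Then E[Y_a] = E[Y | A = a]. In particular, if S = {0,1} and the hypotheses hold for both a = 0 and a = 1, the total effect satisfies E[Y₁] − E[Y₀] = E[Y | A = 1] − E[Y | A = 0]. -/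
/-!
Under consistency, `Y = Y_a` on the event `{A = a}`, so `E[Y | A = a] = E[Y_a | A = a]`.
Independence of `Y_a` and `A` means that conditioning on an event of positive probability
generated by `A` leaves the law of `Y_a` unchanged, hence `E[Y_a | A = a] = E[Y_a]`.
-/

open MeasureTheory ProbabilityTheory

section IndepFun

variable {Ω β γ : Type*} [MeasurableSpace Ω] [MeasurableSpace β] [MeasurableSpace γ]
  {P : Measure Ω} [IsFiniteMeasure P] {X : Ω → β} {A : Ω → γ} {s : Set γ}

lemma ProbabilityTheory.IndepFun.map_cond_preimage_eq_map (hXA : IndepFun X A P)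
    (hX : AEMeasurable X P) (hA : Measurable A) (hs : MeasurableSet s) (hPs : P (A ⁻¹' s) ≠ 0) :
    (P[|A ⁻¹' s]).map X = P.map X := by
  ext t ht
  rw [Measure.map_apply_of_aemeasurable (hX.mono_ac cond_absolutelyContinuous) ht,
    Measure.map_apply_of_aemeasurable hX ht,
    cond_apply (hA hs), Set.inter_comm, hXA.measure_inter_preimage_eq_mul _ _ ht hs, mul_comm,
    mul_assoc, ENNReal.mul_inv_cancel hPs (measure_ne_top P _), mul_one]

lemma ProbabilityTheory.IndepFun.integral_cond_preimage_eq_integral {E : Type*}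
    [NormedAddCommGroup E] [NormedSpace ℝ E] [MeasurableSpace E] [BorelSpace E]
    [SecondCountableTopology E] {X : Ω → E}
    (hXA : IndepFun X A P) (hX : AEMeasurable X P) (hA : Measurable A) (hs : MeasurableSet s)
    (hPs : P (A ⁻¹' s) ≠ 0) :
    ∫ ω, X ω ∂P[|A ⁻¹' s] = ∫ ω, X ω ∂P := by
  calc ∫ ω, X ω ∂P[|A ⁻¹' s] = ∫ x, x ∂(P[|A ⁻¹' s]).map X :=
        (integral_map (hX.mono_ac cond_absolutelyContinuous) aestronglyMeasurable_id).symm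
    _ = ∫ x, x ∂P.map X := by rw [hXA.map_cond_preimage_eq_map hX hA hs hPs]
    _ = ∫ ω, X ω ∂P := integral_map hX aestronglyMeasurable_id

end IndepFun

lemma integral_cond_congr_of_eqOn {Ω E : Type*} [MeasurableSpace Ω] [NormedAddCommGroup E]
    [NormedSpace ℝ E] {P : Measure Ω} {s : Set Ω} (hs : MeasurableSet s) {f g : Ω → E}
    (hfg : Set.EqOn f g s) :
    ∫ ω, f ω ∂P[|s] = ∫ ω, g ω ∂P[|s] :=
  integral_congr_ae <| (ae_cond_mem hs).mono hfg

lemma integral_potentialOutcome_eq_integral_cond {Ω S : Type*} [MeasurableSpace Ω]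
    {P : Measure Ω} [IsFiniteMeasure P] [MeasurableSpace S] [MeasurableSingletonClass S]
    {A : Ω → S} (hA : Measurable A) {Ypo : S → Ω → ℝ} {Y : Ω → ℝ}
    (hcons : ∀ ω, Y ω = Ypo (A ω) ω) {a : S} (hYa : AEMeasurable (Ypo a) P)
    (ha : P {ω | A ω = a} ≠ 0) (hindep : IndepFun (Ypo a) A P) :
    ∫ ω, Ypo a ω ∂P = ∫ ω, Y ω ∂P[|{ω | A ω = a}] := by
  have hE : MeasurableSet {ω | A ω = a} := hA (measurableSet_singleton a)
  rw [integral_cond_congr_of_eqOn hE fun ω (hω : A ω = a) ↦ by rw [hcons, hω]]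
  exact (hindep.integral_cond_preimage_eq_integral hYa hA (measurableSet_singleton a) ha).symm

theorem ignorability_mean_identification_general
    {Ω : Type*} [MeasurableSpace Ω] (P : Measure Ω) [IsProbabilityMeasure P]
    {S : Type*} [MeasurableSpace S] [MeasurableSingletonClass S]
    (A : Ω → S) (hA : Measurable A)
    (Ypo : S → Ω → ℝ) (hYpoMeas : ∀ a, Measurable (Ypo a))
    (Y : Ω → ℝ)
    (hcons : ∀ ω, Y ω = Ypo (A ω) ω)
    (a : S) (ha : 0 < P {ω | A ω = a})
    (hindep : IndepFun (Ypo a) A P) :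
    (∫ ω, Ypo a ω ∂P = ∫ ω, Y ω ∂P[|{ω | A ω = a}])
    ∧ (∀ (A' : Ω → Fin 2), Measurable A' →
        ∀ (Ypo' : Fin 2 → Ω → ℝ), (∀ b, Measurable (Ypo' b)) →
          (∀ b, Integrable (Ypo' b) P) →
        ∀ (Y' : Ω → ℝ), Integrable Y' P →
          (∀ ω, Y' ω = Ypo' (A' ω) ω) →
          (∀ b : Fin 2, 0 < P {ω | A' ω = b}) →
          (∀ b : Fin 2, IndepFun (Ypo' b) A' P) →
          (∫ ω, Ypo' 1 ω ∂P) - (∫ ω, Ypo' 0 ω ∂P)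
            = (∫ ω, Y' ω ∂P[|{ω | A' ω = 1}]) - (∫ ω, Y' ω ∂P[|{ω | A' ω = 0}])) := by
  refine ⟨integral_potentialOutcome_eq_integral_cond hA hcons (hYpoMeas a).aemeasurable ha.ne'
    hindep, ?_⟩
  intro A' hA' Ypo' hYpo' _ Y' _ hcons' hpos hindep'
  have identify (b : Fin 2) := integral_potentialOutcome_eq_integral_cond hA' hcons'
    (hYpo' b).aemeasurable (hpos b).ne' (hindep' b)
  rw [identify 0, identify 1]

/-- Under ignorability `Y_a ⟂ A` and consistency, `E[Y_a] = E[Y | A = a]`.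
In particular, for a binary treatment the total effect `E[Y₁] − E[Y₀]` equals the
observational difference of conditional means `E[Y | A = 1] − E[Y | A = 0]`. -/
theorem ignorability_mean_identification
    {Ω : Type*} [MeasurableSpace Ω] (P : Measure Ω) [IsProbabilityMeasure P]
    {S : Type*} [Countable S] [MeasurableSpace S] [MeasurableSingletonClass S]
    (A : Ω → S) (hA : Measurable A)
    (Ypo : S → Ω → ℝ) (hYpoMeas : ∀ a, Measurable (Ypo a))
    (hYpoInt : ∀ a, Integrable (Ypo a) P)
    (Y : Ω → ℝ) (hYint : Integrable Y P)
    (hcons : ∀ ω, Y ω = Ypo (A ω) ω)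
    (a : S) (ha : 0 < P {ω | A ω = a})
    (hindep : IndepFun (Ypo a) A P) :
    (∫ ω, Ypo a ω ∂P = ∫ ω, Y ω ∂P[|{ω | A ω = a}])
    ∧ (∀ (A' : Ω → Fin 2), Measurable A' →
        ∀ (Ypo' : Fin 2 → Ω → ℝ), (∀ b, Measurable (Ypo' b)) →
          (∀ b, Integrable (Ypo' b) P) →
        ∀ (Y' : Ω → ℝ), Integrable Y' P →
          (∀ ω, Y' ω = Ypo' (A' ω) ω) →
          (∀ b : Fin 2, 0 < P {ω | A' ω = b}) →
          (∀ b : Fin 2, IndepFun (Ypo' b) A' P) →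
          (∫ ω, Ypo' 1 ω ∂P) - (∫ ω, Ypo' 0 ω ∂P)
            = (∫ ω, Y' ω ∂P[|{ω | A' ω = 1}]) - (∫ ω, Y' ω ∂P[|{ω | A' ω = 0}])) :=
  ignorability_mean_identification_general P A hA Ypo hYpoMeas Y hcons a ha hindep
end
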